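/- ∫₀¹ Log(1 + (1+i)·F(x))·(1/x) dx − i·∫₀¹ Log(1 + (1+i)·F(ix))·(1/(ix))·i dx = 2i·∫₀¹ Im Log(1 + (1+i)·F(x))·(1/x) dx; equivalently, ∫₀¹ G(x) dx − ∫_{[0,i]} G(z) dz = 2iI, where G(z) := (1/z)·Log(1 + (1+i)·F(z)), F(z) := (1/(2π))·(Log((1+z)/(1−z)) + i·Log((1+iz)/(1−iz))), and I := ∫₀¹ arctan((artanh x − arctan x)/(π + artanh x − arctan x))·(1/x) dx. -/

import Mathlib

open Complex

/-- The real inverse hyperbolic tangent. -/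
noncomputable def artanh (x : ℝ) : ℝ := (1/2) * Real.log ((1 + x) / (1 - x))

/-- `F(z) = (1/(2π))·(Log((1+z)/(1−z)) + i·Log((1+iz)/(1−iz)))`. -/
noncomputable def F (z : ℂ) : ℂ :=
  (1 / (2 * (Real.pi : ℂ))) *
    (Complex.log ((1 + z) / (1 - z)) + Complex.I * Complex.log ((1 + Complex.I * z) / (1 - Complex.I * z)))

/-- `G(z) = (1/z)·Log(1 + (1+i)·F(z))`. -/
noncomputable def G (z : ℂ) : ℂ := (1 / z) * Complex.log (1 + (1 + Complex.I) * F z)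

/-!
On `(0, 1)` the function `F` is real, `F x = (artanh x - arctan x) / π`, and `F (i x) = -i F x`.
Since `(1 + i)(-i) = 1 - i`, the integrand along `[0, i]` is the complex conjugate of the
integrand `G x` along `[0, 1]`, so the difference of the two integrals is `2i Im ∫₀¹ G`, and
`Im Log (1 + (1 + i) t) = arctan (t / (1 + t))`. The analytic input is the integrability of `G`
on `(0, 1)`: `0 ≤ F x ≤ artanh x ≤ x / √(1 - x²)` and `‖Log (1 + (1 + i) t)‖ ≤ 3 t` for
`t ≥ 0` give `‖G x‖ ≤ 3 (1 - x)^(-1/2)`.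
-/

open Set MeasureTheory intervalIntegral
open scoped Real ComplexConjugate

noncomputable def realF (x : ℝ) : ℝ := (artanh x - Real.arctan x) / π

noncomputable def logIntegrand (x : ℝ) : ℂ := Complex.log (1 + (1 + I) * realF x) / x

lemma artanh_eq_real_artanh {x : ℝ} (hx : x ∈ Icc (-1) 1) : artanh x = Real.artanh x :=
  (Real.artanh_eq_half_log hx).symm

lemma self_le_artanh {x : ℝ} (h0 : 0 ≤ x) (h1 : x < 1) : x ≤ artanh x := by
  have hx : |x| < 1 := abs_lt.2 ⟨by linarith, h1⟩
  have h : 2 * x ≤ Real.log (1 + x) - Real.log (1 - x) := by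
    simpa using le_hasSum (Real.hasSum_log_sub_log_of_abs_lt_one hx) 0 fun k _ => by positivity
  rw [artanh, Real.log_div (by linarith) (by linarith)]
  linarith

lemma artanh_le_div_sqrt {x : ℝ} (h0 : 0 ≤ x) (h1 : x < 1) :
    artanh x ≤ x / √(1 - x ^ 2) := by
  have hx : x ∈ Ioo (-1) 1 := ⟨by linarith, h1⟩
  rw [artanh_eq_real_artanh (Ioo_subset_Icc_self hx), ← Real.sinh_artanh hx]
  exact Real.self_le_sinh_iff.2 (Real.artanh_nonneg h0)

lemma arctan_le_self {x : ℝ} (hx : 0 ≤ x) : Real.arctan x ≤ x := by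
  simpa only [Real.tan_arctan] using
    Real.le_tan (Real.arctan_nonneg.2 hx) (Real.arctan_lt_pi_div_two x)

lemma realF_nonneg {x : ℝ} (h0 : 0 ≤ x) (h1 : x < 1) : 0 ≤ realF x :=
  div_nonneg (by linarith [arctan_le_self h0, self_le_artanh h0 h1]) Real.pi_pos.le

lemma realF_le {x : ℝ} (h0 : 0 ≤ x) (h1 : x < 1) : realF x ≤ x / √(1 - x) := by
  have hsqrt : √(1 - x) ≤ √(1 - x ^ 2) := Real.sqrt_le_sqrt (by nlinarith)
  calc realF x ≤ artanh x := by
        rw [realF, div_le_iff₀ Real.pi_pos]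
        nlinarith [Real.arctan_nonneg.2 h0, self_le_artanh h0 h1, Real.pi_gt_three]
    _ ≤ x / √(1 - x ^ 2) := artanh_le_div_sqrt h0 h1
    _ ≤ x / √(1 - x) := div_le_div_of_nonneg_left h0 (Real.sqrt_pos.2 (by linarith)) hsqrt

lemma realF_div_one_add_realF (x : ℝ) :
    realF x / (1 + realF x) = (artanh x - Real.arctan x) / (π + artanh x - Real.arctan x) := by
  rw [realF, one_add_div Real.pi_ne_zero, div_div_div_cancel_right₀ Real.pi_ne_zero,
    add_sub_assoc]

lemma log_one_add_I_mul_div_one_sub_I_mul (x : ℝ) :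
    Complex.log ((1 + I * x) / (1 - I * x)) = 2 * Real.arctan x * I := by
  rw [Complex.ofReal_arctan, Complex.arctan, mul_comm I]
  ring_nf
  rw [I_sq]
  ring

lemma one_add_div_one_sub_ofReal (x : ℝ) :
    (1 + (x : ℂ)) / (1 - x) = ((1 + x) / (1 - x) : ℝ) := by
  push_cast
  ring

lemma one_add_div_one_sub_pos {x : ℝ} (hx : x ∈ Ioo (-1) 1) : 0 < (1 + x) / (1 - x) :=
  div_pos (by linarith [hx.1]) (by linarith [hx.2])

lemma log_one_add_div_one_sub {x : ℝ} (hx : x ∈ Ioo (-1) 1) :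
    Complex.log ((1 + x) / (1 - x)) = (2 * artanh x : ℝ) := by
  rw [one_add_div_one_sub_ofReal, ← Complex.ofReal_log (one_add_div_one_sub_pos hx).le, artanh]
  ring_nf

lemma F_ofReal {x : ℝ} (hx : x ∈ Ioo (-1) 1) : F x = realF x := by
  rw [F, log_one_add_div_one_sub hx, log_one_add_I_mul_div_one_sub_I_mul, realF]
  push_cast
  field_simp
  ring_nf
  rw [I_sq]
  ring

lemma F_I_mul {z : ℂ} (hz : ((1 + z) / (1 - z)).arg ≠ π) : F (I * z) = -I * F z := by
  have hII : I * (I * z) = -z := by rw [← mul_assoc, I_mul_I, neg_one_mul]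
  rw [F, F, hII, sub_neg_eq_add, ← sub_eq_add_neg, ← inv_div (1 + z), Complex.log_inv _ hz]
  ring_nf
  rw [I_sq]
  ring

lemma arg_one_add_div_one_sub {x : ℝ} (hx : x ∈ Ioo (-1) 1) :
    ((1 + (x : ℂ)) / (1 - x)).arg ≠ π := by
  rw [one_add_div_one_sub_ofReal, Complex.arg_ofReal_of_nonneg (one_add_div_one_sub_pos hx).le]
  exact Real.pi_ne_zero.symm

section LogOneAddOneAddIMul

variable {t : ℝ}

lemma re_one_add_one_add_I_mul : (1 + (1 + I) * t).re = 1 + t := by simp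

lemma im_one_add_one_add_I_mul : (1 + (1 + I) * t).im = t := by simp

lemma log_one_add_one_sub_I_mul (ht : -1 < t) :
    Complex.log (1 + (1 - I) * t) = conj (Complex.log (1 + (1 + I) * t)) := by
  have hconj : 1 + (1 - I) * t = conj (1 + (1 + I) * t) := by simp [sub_eq_add_neg]
  rw [hconj, Complex.log_conj]
  rw [Ne, Complex.arg_eq_pi_iff, re_one_add_one_add_I_mul]
  exact fun h => by linarith [h.1]

lemma im_log_one_add_one_add_I_mul (ht : -1 < t) :
    (Complex.log (1 + (1 + I) * t)).im = Real.arctan (t / (1 + t)) := by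
  have hre : 0 < (1 + (1 + I) * t).re := by rw [re_one_add_one_add_I_mul]; linarith
  have harg := Complex.abs_arg_lt_pi_div_two_iff.2 (Or.inl hre)
  have htan : Real.tan (1 + (1 + I) * t).arg = t / (1 + t) := by
    rw [Complex.tan_arg, re_one_add_one_add_I_mul, im_one_add_one_add_I_mul]
  rw [Complex.log_im]
  exact (Real.arctan_eq_of_tan_eq htan (abs_lt.1 harg)).symm

lemma norm_log_one_add_one_add_I_mul_le (ht : 0 ≤ t) :
    ‖Complex.log (1 + (1 + I) * t)‖ ≤ 3 * t := by
  set w : ℂ := 1 + (1 + I) * t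
  have hw_ge : 1 ≤ ‖w‖ := by
    have := Complex.re_le_norm w
    rw [re_one_add_one_add_I_mul] at this
    linarith
  have hw_le : ‖w‖ ≤ 1 + 2 * t := by
    have h1I : ‖(1 : ℂ) + I‖ ≤ 2 := (norm_add_le _ _).trans (by simp; norm_num)
    calc ‖w‖ ≤ ‖(1 : ℂ)‖ + ‖(1 + I) * t‖ := norm_add_le _ _
      _ = 1 + ‖(1 : ℂ) + I‖ * t := by
        rw [norm_mul, Complex.norm_real, Real.norm_of_nonneg ht, norm_one]
      _ ≤ 1 + 2 * t := by gcongr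
  have hlog : |Real.log ‖w‖| ≤ 2 * t := by
    rw [abs_of_nonneg (Real.log_nonneg hw_ge)]
    linarith [Real.log_le_sub_one_of_pos (zero_lt_one.trans_le hw_ge)]
  have harg : |w.arg| ≤ t := by
    have hq : 0 ≤ t / (1 + t) := by positivity
    rw [← Complex.log_im, im_log_one_add_one_add_I_mul (by linarith),
      abs_of_nonneg (Real.arctan_nonneg.2 hq)]
    exact (arctan_le_self hq).trans (div_le_self ht (by linarith))
  calc ‖Complex.log w‖ ≤ |(Complex.log w).re| + |(Complex.log w).im| :=
        Complex.norm_le_abs_re_add_abs_im _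
    _ ≤ 3 * t := by rw [Complex.log_re, Complex.log_im]; linarith

end LogOneAddOneAddIMul

lemma G_ofReal {x : ℝ} (hx : x ∈ Ioo (-1) 1) : G x = logIntegrand x := by
  rw [G, F_ofReal hx, logIntegrand, one_div_mul_eq_div]

lemma G_I_mul_mul_I {x : ℝ} (h0 : 0 ≤ x) (h1 : x < 1) :
    G (I * x) * I = conj (logIntegrand x) := by
  have hx : x ∈ Ioo (-1) 1 := ⟨by linarith, h1⟩
  have hrot : (1 + I) * (-I * realF x) = (1 - I) * realF x := by ring_nf; rw [I_sq]; ring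
  rw [G, F_I_mul (arg_one_add_div_one_sub hx), F_ofReal hx, hrot,
    log_one_add_one_sub_I_mul (by linarith [realF_nonneg h0 h1]), logIntegrand, map_div₀,
    Complex.conj_ofReal, one_div, mul_inv, Complex.inv_I]
  ring_nf
  rw [I_sq]
  ring

lemma im_logIntegrand {x : ℝ} (h0 : 0 ≤ x) (h1 : x < 1) :
    (logIntegrand x).im = Real.arctan (realF x / (1 + realF x)) / x := by
  rw [logIntegrand, Complex.div_ofReal_im,
    im_log_one_add_one_add_I_mul (by linarith [realF_nonneg h0 h1])]

lemma norm_logIntegrand_le {x : ℝ} (h0 : 0 < x) (h1 : x < 1) :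
    ‖logIntegrand x‖ ≤ 3 * (1 - x) ^ (-(1 / 2) : ℝ) := by
  have hsqrt : (1 - x) ^ (-(1 / 2) : ℝ) = 1 / √(1 - x) := by
    rw [Real.rpow_neg (by linarith), ← Real.sqrt_eq_rpow, one_div]
  calc ‖logIntegrand x‖ ≤ 3 * realF x / x := by
        rw [logIntegrand, norm_div, Complex.norm_real, Real.norm_of_nonneg h0.le]
        gcongr
        exact norm_log_one_add_one_add_I_mul_le (realF_nonneg h0.le h1)
    _ ≤ 3 * (x / √(1 - x)) / x := by gcongr; exact realF_le h0.le h1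
    _ = 3 * (1 - x) ^ (-(1 / 2) : ℝ) := by rw [hsqrt]; field_simp

lemma measurable_logIntegrand : Measurable logIntegrand := by
  unfold logIntegrand realF artanh
  fun_prop

lemma intervalIntegrable_logIntegrand : IntervalIntegrable logIntegrand volume 0 1 := by
  have hmajorant :
      IntervalIntegrable (fun x : ℝ => 3 * (1 - x) ^ (-(1 / 2) : ℝ)) volume 0 1 := by
    have h := (intervalIntegrable_rpow' (a := 0) (b := 1)
      (r := -(1 / 2)) (by norm_num)).comp_sub_left 1
    norm_num at h
    exact h.symm.const_mul 3
  refine hmajorant.mono_fun' measurable_logIntegrand.aestronglyMeasurable ?_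
  rw [uIoc_of_le zero_le_one]
  filter_upwards [ae_restrict_mem measurableSet_Ioc, (volume.restrict (Ioc (0 : ℝ) 1)).ae_ne 1]
    with x hx hx1
  exact norm_logIntegrand_le hx.1 (lt_of_le_of_ne hx.2 hx1)

lemma integral_sub_integral_conj {f : ℝ → ℂ} {a b : ℝ}
    (hf : IntervalIntegrable f volume a b) :
    (∫ x in a..b, f x) - ∫ x in a..b, conj (f x) = 2 * I * ∫ x in a..b, ((f x).im : ℂ) := by
  have him : ∫ x in a..b, (f x).im = (∫ x in a..b, f x).im := intervalIntegral_im hf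
  rw [intervalIntegral_conj, Complex.sub_conj, intervalIntegral.integral_ofReal, him]
  push_cast
  ring

/-- `∫₀¹ Log(1 + (1+i)F(x))·(1/x) dx − ∫₀¹ Log(1 + (1+i)F(ix))·(1/(ix))·i dx
  = 2i·∫₀¹ Im Log(1 + (1+i)F(x))·(1/x) dx`;
equivalently `∫₀¹ G(x) dx − ∫_{[0,i]} G(z) dz = 2iI`, the contour integral over `[0,i]`
being parametrized as `z = ix`, `0 ≤ x ≤ 1`, and
`I = ∫₀¹ arctan((artanh x − arctan x)/(π + artanh x − arctan x))·(1/x) dx`. -/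
theorem segment_integrals_combine :
    ((∫ x in (0:ℝ)..1, Complex.log (1 + (1 + Complex.I) * F (x : ℂ)) * (1 / (x : ℂ)))
        - ∫ x in (0:ℝ)..1,
            Complex.log (1 + (1 + Complex.I) * F (Complex.I * (x : ℂ)))
              * (1 / (Complex.I * (x : ℂ))) * Complex.I
      = 2 * Complex.I *
          ∫ x in (0:ℝ)..1,
            (((Complex.log (1 + (1 + Complex.I) * F (x : ℂ))).im : ℂ) * (1 / (x : ℂ)))) ∧
    ((∫ x in (0:ℝ)..1, G (x : ℂ)) - ∫ x in (0:ℝ)..1, G (Complex.I * (x : ℂ)) * Complex.I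
      = 2 * Complex.I *
          ((∫ x in (0:ℝ)..1,
              Real.arctan ((artanh x - Real.arctan x) / (Real.pi + artanh x - Real.arctan x))
                * (1/x) : ℝ) : ℂ)) := by
  have hIoo : Ioo (0 : ℝ) 1 ⊆ Ioo (-1) 1 := Ioo_subset_Ioo_left (by norm_num)
  have hdiff : (∫ x in (0:ℝ)..1, G x) - ∫ x in (0:ℝ)..1, G (I * x) * I
      = 2 * I * ∫ x in (0:ℝ)..1, ((logIntegrand x).im : ℂ) := by
    rw [integral_congr_Ioo_of_le zero_le_one fun x hx => G_ofReal (hIoo hx),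
      integral_congr_Ioo_of_le zero_le_one fun x hx => G_I_mul_mul_I hx.1.le hx.2]
    exact integral_sub_integral_conj intervalIntegrable_logIntegrand
  have hG (z : ℂ) : Complex.log (1 + (1 + I) * F z) * (1 / z) = G z := mul_comm _ _
  simp only [hG]
  refine ⟨hdiff.trans ?_, hdiff.trans ?_⟩
  · refine congrArg _ (integral_congr_Ioo_of_le zero_le_one fun x hx => ?_)
    rw [F_ofReal (hIoo hx), logIntegrand, Complex.div_ofReal_im]
    push_cast
    ring
  · rw [← intervalIntegral.integral_ofReal]
    refine congrArg _ (integral_congr_Ioo_of_le zero_le_one fun x hx => ?_)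
    simp only [im_logIntegrand hx.1.le hx.2, realF_div_one_add_realF, mul_one_div]
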